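/- arXiv:1511.05491 — 5 statements merged into one kernel-verified Lean document; each statement's English description precedes it below -/
import Mathlib

section
/- Let Δ be a symmetric positive definite real p×p matrix, let α be a real p×d matrix with orthonormal columns, and let α0 be a real p×(p−d) matrix whose columns form an orthonormal basis of the orthogonal complement of the column space of α. Then Δ⁻¹ = α(αᵀΔα)⁻¹αᵀ + Δ⁻¹α0(α0ᵀΔ⁻¹α0)⁻¹α0ᵀΔ⁻¹. -/
/-!
Put `A = αᵀΔα` and let `M` be the right-hand side. A direct computation gives
`M (Δα) = α = Δ⁻¹ (Δα)` and `M α0 = Δ⁻¹ α0`, so it suffices that the columns of `Δα` and `α0`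
together span: if `Y α0 = 0` then `Y = Y α αᵀ` (because `ααᵀ + α0α0ᵀ = 1`), and then
`Y (Δα) = (Y α) A` vanishes only when `Y α = 0`, i.e. `Y = 0`.
-/

open Matrix

namespace Matrix

variable {R : Type*} [CommRing R] {l m n k : Type*} [Fintype m] [DecidableEq m] [Fintype n]
  [DecidableEq n] [Fintype k]

omit [DecidableEq m] [DecidableEq n] [Fintype n] [Fintype k] in
lemma transpose_mul_eq_zero_comm {A : Matrix m n R} {B : Matrix m k R} :
    Aᵀ * B = 0 ↔ Bᵀ * A = 0 := by
  rw [← transpose_inj, transpose_mul, transpose_transpose, transpose_zero]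

lemma mul_transpose_add_mul_transpose_eq_one [DecidableEq k] (e : m ≃ n ⊕ k)
    {α : Matrix m n R} {α0 : Matrix m k R} (hα : αᵀ * α = 1) (hα0 : α0ᵀ * α0 = 1)
    (horth : αᵀ * α0 = 0) : α * αᵀ + α0 * α0ᵀ = 1 := by
  have horth' : α0ᵀ * α = 0 := transpose_mul_eq_zero_comm.1 horth
  have h : fromRows αᵀ α0ᵀ * fromCols α α0 = 1 := by
    rw [fromRows_mul_fromCols, hα, hα0, horth, horth', fromBlocks_one]
  rw [← fromCols_mul_fromRows, (fromCols_mul_fromRows_eq_one_comm e _ _ _ _).2 h]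

lemma eq_zero_of_mul_mul_eq_zero_of_mul_eq_zero {α : Matrix m n R} {α0 : Matrix m k R}
    {Δ : Matrix m m R} (hcomp : α * αᵀ + α0 * α0ᵀ = 1) (hA : IsUnit (αᵀ * Δ * α).det)
    {Y : Matrix l m R} (hΔα : Y * (Δ * α) = 0) (hα0 : Y * α0 = 0) : Y = 0 := by
  have hY : Y = Y * α * αᵀ := by
    calc Y = Y * (α * αᵀ + α0 * α0ᵀ) := by rw [hcomp, Matrix.mul_one]
      _ = Y * α * αᵀ := by rw [Matrix.mul_add, ← Matrix.mul_assoc Y α0, hα0, Matrix.zero_mul,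
        add_zero, Matrix.mul_assoc]
  have hYα : Y * α = 0 := by
    calc Y * α = Y * α * (αᵀ * Δ * α) * (αᵀ * Δ * α)⁻¹ :=
          (mul_nonsing_inv_cancel_right _ _ hA).symm
      _ = Y * α * αᵀ * (Δ * α) * (αᵀ * Δ * α)⁻¹ := by simp only [Matrix.mul_assoc]
      _ = 0 := by rw [← hY, hΔα, Matrix.zero_mul]
  rw [hY, hYα, Matrix.zero_mul]

theorem inv_eq_add_of_mul_transpose_add_mul_transpose_eq_one {α : Matrix m n R}
    {α0 : Matrix m k R} {Δ : Matrix m m R} [DecidableEq k] (hcomp : α * αᵀ + α0 * α0ᵀ = 1)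
    (horth : αᵀ * α0 = 0) (hΔ : IsUnit Δ.det) (hA : IsUnit (αᵀ * Δ * α).det)
    (hC : IsUnit (α0ᵀ * Δ⁻¹ * α0).det) :
    Δ⁻¹ = α * (αᵀ * Δ * α)⁻¹ * αᵀ + Δ⁻¹ * α0 * (α0ᵀ * Δ⁻¹ * α0)⁻¹ * α0ᵀ * Δ⁻¹ := by
  have horth' : α0ᵀ * α = 0 := transpose_mul_eq_zero_comm.1 horth
  have hαα : α * (αᵀ * Δ * α)⁻¹ * αᵀ * (Δ * α) = α := by
    calc _ = α * (αᵀ * Δ * α)⁻¹ * (αᵀ * Δ * α) := by simp only [Matrix.mul_assoc]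
      _ = α := nonsing_inv_mul_cancel_right _ _ hA
  have hαα0 : α * (αᵀ * Δ * α)⁻¹ * αᵀ * α0 = 0 := by
    rw [Matrix.mul_assoc, horth, Matrix.mul_zero]
  have hα0α : Δ⁻¹ * α0 * (α0ᵀ * Δ⁻¹ * α0)⁻¹ * α0ᵀ * Δ⁻¹ * (Δ * α) = 0 := by
    rw [Matrix.mul_assoc, nonsing_inv_mul_cancel_left _ _ hΔ, Matrix.mul_assoc, horth',
      Matrix.mul_zero]
  have hα0α0 : Δ⁻¹ * α0 * (α0ᵀ * Δ⁻¹ * α0)⁻¹ * α0ᵀ * Δ⁻¹ * α0 = Δ⁻¹ * α0 := by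
    calc _ = Δ⁻¹ * α0 * (α0ᵀ * Δ⁻¹ * α0)⁻¹ * (α0ᵀ * Δ⁻¹ * α0) := by
          simp only [Matrix.mul_assoc]
      _ = Δ⁻¹ * α0 := nonsing_inv_mul_cancel_right _ _ hC
  rw [← sub_eq_zero]
  refine eq_zero_of_mul_mul_eq_zero_of_mul_eq_zero hcomp hA ?_ ?_
  · rw [Matrix.sub_mul, Matrix.add_mul, hαα, hα0α, add_zero, nonsing_inv_mul_cancel_left _ _ hΔ,
      sub_self]
  · rw [Matrix.sub_mul, Matrix.add_mul, hαα0, hα0α0, zero_add, sub_self]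

omit [DecidableEq m] in
lemma isUnit_det_transpose_mul_mul_of_posDef {Δ : Matrix m m ℝ} (hΔ : Δ.PosDef)
    {β : Matrix m n ℝ} (hβ : βᵀ * β = 1) : IsUnit (βᵀ * Δ * β).det := by
  have hinj : Function.Injective β.mulVec := Function.LeftInverse.injective (g := βᵀ.mulVec)
    fun x => by rw [mulVec_mulVec, hβ, one_mulVec]
  exact (isUnit_iff_isUnit_det _).1 (hΔ.conjTranspose_mul_mul_same hinj).isUnit

end Matrix

theorem delta_inverse_decomposition_general
    (p d : ℕ) (hdp : d < p)
    (Δ : Matrix (Fin p) (Fin p) ℝ) (hΔ : Δ.PosDef)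
    (α : Matrix (Fin p) (Fin d) ℝ) (hα : αᵀ * α = 1)
    (α0 : Matrix (Fin p) (Fin (p - d)) ℝ) (hα0 : α0ᵀ * α0 = 1)
    (horth : αᵀ * α0 = 0) :
    Δ⁻¹ = α * (αᵀ * Δ * α)⁻¹ * αᵀ
        + Δ⁻¹ * α0 * (α0ᵀ * Δ⁻¹ * α0)⁻¹ * α0ᵀ * Δ⁻¹ := by
  have e : Fin p ≃ Fin d ⊕ Fin (p - d) := (finCongr (by omega)).trans finSumFinEquiv.symm
  exact inv_eq_add_of_mul_transpose_add_mul_transpose_eq_one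
    (mul_transpose_add_mul_transpose_eq_one e hα hα0 horth) horth
    ((isUnit_iff_isUnit_det Δ).1 hΔ.isUnit)
    (isUnit_det_transpose_mul_mul_of_posDef hΔ hα)
    (isUnit_det_transpose_mul_mul_of_posDef hΔ.inv hα0)

theorem delta_inverse_decomposition
    (p d : ℕ) (hd : 0 < d) (hdp : d < p)
    (Δ : Matrix (Fin p) (Fin p) ℝ) (hΔ : Δ.PosDef)
    (α : Matrix (Fin p) (Fin d) ℝ) (hα : αᵀ * α = 1)
    (α0 : Matrix (Fin p) (Fin (p - d)) ℝ) (hα0 : α0ᵀ * α0 = 1)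
    (horth : αᵀ * α0 = 0) :
    Δ⁻¹ = α * (αᵀ * Δ * α)⁻¹ * αᵀ
        + Δ⁻¹ * α0 * (α0ᵀ * Δ⁻¹ * α0)⁻¹ * α0ᵀ * Δ⁻¹ :=
  delta_inverse_decomposition_general p d hdp Δ hΔ α hα α0 hα0 horth
end

section
/- Let Δ be a symmetric positive definite real p×p matrix, let α be a real p×d matrix with orthonormal columns, and let α0 be a real p×(p−d) matrix whose columns form an orthonormal basis of the orthogonal complement of the column space of α. Then det Δ = det(αᵀΔα) / det(α0ᵀΔ⁻¹α0). -/
/-!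
With `Q := (α α₀)` and `C := (α  Δ⁻¹α₀)` one has block-triangular products
`Qᵀ Δ C = [[αᵀΔα, 0], [α₀ᵀΔα, 1]]` and `Qᵀ C = [[1, αᵀΔ⁻¹α₀], [0, α₀ᵀΔ⁻¹α₀]]`.
Taking determinants, `det Q · det Δ · det C = det (αᵀΔα)` and `det Q · det C = det (α₀ᵀΔ⁻¹α₀)`,
hence `det Δ · det (α₀ᵀΔ⁻¹α₀) = det (αᵀΔα)`, and `det (α₀ᵀΔ⁻¹α₀) > 0` since `Δ⁻¹` is positive definite.
-/

open Matrix

namespace Matrix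

variable {ι m n R : Type*} [Fintype ι] [CommRing R]

theorem det_transpose_mul_mul {κ : Type*} [DecidableEq ι] [Fintype κ] [DecidableEq κ]
    (e : ι ≃ κ) (P N : Matrix ι κ R) (X : Matrix ι ι R) :
    (Pᵀ * X * N).det = (P.submatrix id e).det * X.det * (N.submatrix id e).det := by
  rw [← det_submatrix_equiv_self e, ← submatrix_mul_equiv _ _ _ (Equiv.refl ι),
    ← submatrix_mul_equiv _ _ _ (Equiv.refl ι)]
  simp [det_mul, ← transpose_submatrix]

theorem fromCols_transpose_mul_mul_fromCols_mul [DecidableEq ι] [DecidableEq n]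
    {Δ Δ' : Matrix ι ι R} (hΔ : Δ * Δ' = 1) {α : Matrix ι m R} {α₀ : Matrix ι n R}
    (hα₀ : α₀ᵀ * α₀ = 1) (horth : αᵀ * α₀ = 0) :
    (fromCols α α₀)ᵀ * Δ * fromCols α (Δ' * α₀) =
      fromBlocks (αᵀ * Δ * α) 0 (α₀ᵀ * Δ * α) 1 := by
  rw [Matrix.mul_assoc, mul_fromCols, ← Matrix.mul_assoc Δ, hΔ, Matrix.one_mul,
    transpose_fromCols, fromRows_mul_fromCols]
  simp only [Matrix.mul_assoc, horth, hα₀]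

theorem fromCols_transpose_mul_fromCols_mul [DecidableEq m] (Δ' : Matrix ι ι R)
    {α : Matrix ι m R} {α₀ : Matrix ι n R} (hα : αᵀ * α = 1) (horth : αᵀ * α₀ = 0) :
    (fromCols α α₀)ᵀ * fromCols α (Δ' * α₀) =
      fromBlocks 1 (αᵀ * Δ' * α₀) 0 (α₀ᵀ * Δ' * α₀) := by
  have horth' : α₀ᵀ * α = 0 := by simpa using congrArg transpose horth
  rw [transpose_fromCols, fromRows_mul_fromCols]
  simp only [Matrix.mul_assoc, hα, horth']

theorem det_mul_det_compression_inv_eq [DecidableEq ι] [Fintype m] [DecidableEq m]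
    [Fintype n] [DecidableEq n] (hcard : Fintype.card m + Fintype.card n = Fintype.card ι)
    {Δ Δ' : Matrix ι ι R} (hΔ : Δ * Δ' = 1) {α : Matrix ι m R} {α₀ : Matrix ι n R}
    (hα : αᵀ * α = 1) (hα₀ : α₀ᵀ * α₀ = 1) (horth : αᵀ * α₀ = 0) :
    Δ.det * (α₀ᵀ * Δ' * α₀).det = (αᵀ * Δ * α).det := by
  obtain e : ι ≃ m ⊕ n := Fintype.equivOfCardEq (by rw [Fintype.card_sum, hcard])
  have hΔblock := congrArg det (fromCols_transpose_mul_mul_fromCols_mul hΔ hα₀ horth)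
  have honeblock := congrArg det (fromCols_transpose_mul_fromCols_mul Δ' hα horth)
  rw [det_transpose_mul_mul e, det_fromBlocks_zero₁₂] at hΔblock
  rw [← Matrix.mul_one (fromCols α α₀)ᵀ, det_transpose_mul_mul e,
    det_fromBlocks_zero₂₁] at honeblock
  simp only [det_one, mul_one, one_mul] at hΔblock honeblock
  rw [← hΔblock, ← honeblock]
  ring

theorem PosDef.transpose_mul_mul_of_transpose_mul_self_eq_one [Fintype m] [DecidableEq m]
    {M : Matrix ι ι ℝ} (hM : M.PosDef) {V : Matrix ι m ℝ} (hV : Vᵀ * V = 1) :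
    (Vᵀ * M * V).PosDef := by
  have hinj : Function.Injective V.mulVec := fun u v h => by
    simpa [mulVec_mulVec, hV] using congrArg (Vᵀ *ᵥ ·) h
  simpa using hM.conjTranspose_mul_mul_same hinj

end Matrix

theorem delta_det_decomposition_general
    (p d : ℕ) (hdp : d < p)
    (Δ : Matrix (Fin p) (Fin p) ℝ) (hΔ : Δ.PosDef)
    (α : Matrix (Fin p) (Fin d) ℝ) (hα : αᵀ * α = 1)
    (α0 : Matrix (Fin p) (Fin (p - d)) ℝ) (hα0 : α0ᵀ * α0 = 1)
    (horth : αᵀ * α0 = 0) :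
    Δ.det = (αᵀ * Δ * α).det / (α0ᵀ * Δ⁻¹ * α0).det := by
  have hcard : Fintype.card (Fin d) + Fintype.card (Fin (p - d)) = Fintype.card (Fin p) := by
    simp only [Fintype.card_fin]
    omega
  have hΔinv : Δ * Δ⁻¹ = 1 := mul_nonsing_inv Δ ((isUnit_iff_isUnit_det Δ).1 hΔ.isUnit)
  have hdet := det_mul_det_compression_inv_eq hcard hΔinv hα hα0 horth
  have hpos := (hΔ.inv.transpose_mul_mul_of_transpose_mul_self_eq_one hα0).det_pos
  rw [eq_div_iff hpos.ne', hdet]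

theorem delta_det_decomposition
    (p d : ℕ) (hd : 0 < d) (hdp : d < p)
    (Δ : Matrix (Fin p) (Fin p) ℝ) (hΔ : Δ.PosDef)
    (α : Matrix (Fin p) (Fin d) ℝ) (hα : αᵀ * α = 1)
    (α0 : Matrix (Fin p) (Fin (p - d)) ℝ) (hα0 : α0ᵀ * α0 = 1)
    (horth : αᵀ * α0 = 0) :
    Δ.det = (αᵀ * Δ * α).det / (α0ᵀ * Δ⁻¹ * α0).det :=
  delta_det_decomposition_general p d hdp Δ hΔ α hα α0 hα0 horth
end

section
/- Let Δ be a symmetric positive definite real p×p matrix, let α be a real p×d matrix with orthonormal columns, and let α0 be a real p×(p−d) matrix whose columns form an orthonormal basis of the orthogonal complement of the column space of α. Then (αᵀΔα)⁻¹ αᵀΔα0 = − αᵀΔ⁻¹α0 (α0ᵀΔ⁻¹α0)⁻¹. -/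
/-!
Write `A = αᵀΔα`, `B = αᵀΔα0`, `X = αᵀΔ⁻¹α0`, `Z = α0ᵀΔ⁻¹α0`. Since `(α α0)` is
orthogonal, `ααᵀ + α0α0ᵀ = 1`, so inserting it between `Δ` and `Δ⁻¹` gives
`A X + B Z = αᵀ Δ (ααᵀ + α0α0ᵀ) Δ⁻¹ α0 = αᵀα0 = 0`, i.e. `A⁻¹ B = -X Z⁻¹`.
Positive definiteness only serves to make `A` and `Z` invertible.
-/

open Matrix

namespace Matrix

variable {R m n₁ n₂ : Type*} [Fintype m] [Fintype n₁] [Fintype n₂]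

theorem PosDef.transpose_mul_mul_same [DecidableEq n₁] {Δ : Matrix m m ℝ} (hΔ : Δ.PosDef)
    {A : Matrix m n₁ ℝ} (hA : Aᵀ * A = 1) : (Aᵀ * Δ * A).PosDef :=
  hΔ.conjTranspose_mul_mul_same fun x y hxy ↦ by
    simpa [mulVec_mulVec, hA] using congrArg (Aᵀ *ᵥ ·) hxy

theorem mul_transpose_add_mul_transpose_eq_one_s2 [CommRing R] [DecidableEq m] [DecidableEq n₁]
    [DecidableEq n₂] (e : m ≃ n₁ ⊕ n₂) {A : Matrix m n₁ R} {B : Matrix m n₂ R}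
    (hA : Aᵀ * A = 1) (hB : Bᵀ * B = 1) (hAB : Aᵀ * B = 0) : A * Aᵀ + B * Bᵀ = 1 := by
  have hBA : Bᵀ * A = 0 := by rw [← transpose_transpose A, ← transpose_mul, hAB, transpose_zero]
  rw [← fromCols_mul_fromRows, fromCols_mul_fromRows_eq_one_comm e, fromRows_mul_fromCols,
    hA, hB, hAB, hBA, fromBlocks_one]

theorem transpose_mul_mul_add_transpose_mul_mul_eq_zero [CommRing R] [DecidableEq m]
    {Δ : Matrix m m R} (hΔ : IsUnit Δ.det) {A : Matrix m n₁ R} {B : Matrix m n₂ R}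
    (hcompl : A * Aᵀ + B * Bᵀ = 1) (hAB : Aᵀ * B = 0) :
    (Aᵀ * Δ * A) * (Aᵀ * Δ⁻¹ * B) + (Aᵀ * Δ * B) * (Bᵀ * Δ⁻¹ * B) = 0 :=
  calc (Aᵀ * Δ * A) * (Aᵀ * Δ⁻¹ * B) + (Aᵀ * Δ * B) * (Bᵀ * Δ⁻¹ * B)
      = Aᵀ * (Δ * ((A * Aᵀ + B * Bᵀ) * (Δ⁻¹ * B))) := by
        simp only [Matrix.mul_add, Matrix.add_mul, Matrix.mul_assoc]
    _ = 0 := by rw [hcompl, Matrix.one_mul, ← Matrix.mul_assoc Δ, mul_nonsing_inv _ hΔ,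
        Matrix.one_mul, hAB]

theorem inv_mul_eq_neg_mul_inv_of_mul_add_mul_eq_zero [CommRing R] [DecidableEq n₁]
    [DecidableEq n₂] {A : Matrix n₁ n₁ R} {Z : Matrix n₂ n₂ R} {B X : Matrix n₁ n₂ R}
    (hA : IsUnit A.det) (hZ : IsUnit Z.det)
    (h : A * X + B * Z = 0) : A⁻¹ * B = -(X * Z⁻¹) := by
  have hB : B * Z = -(A * X) := eq_neg_of_add_eq_zero_right h
  calc A⁻¹ * B = A⁻¹ * (B * Z) * Z⁻¹ := by
        rw [Matrix.mul_assoc, Matrix.mul_assoc, mul_nonsing_inv _ hZ, Matrix.mul_one]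
    _ = -(X * Z⁻¹) := by
        rw [hB, Matrix.mul_neg, ← Matrix.mul_assoc, nonsing_inv_mul _ hA, Matrix.one_mul,
          Matrix.neg_mul]

end Matrix

theorem delta_cross_block_identity_general
    (p d : ℕ) (hdp : d < p)
    (Δ : Matrix (Fin p) (Fin p) ℝ) (hΔ : Δ.PosDef)
    (α : Matrix (Fin p) (Fin d) ℝ) (hα : αᵀ * α = 1)
    (α0 : Matrix (Fin p) (Fin (p - d)) ℝ) (hα0 : α0ᵀ * α0 = 1)
    (horth : αᵀ * α0 = 0) :
    (αᵀ * Δ * α)⁻¹ * (αᵀ * Δ * α0)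
      = -(αᵀ * Δ⁻¹ * α0 * (α0ᵀ * Δ⁻¹ * α0)⁻¹) := by
  have e : Fin p ≃ Fin d ⊕ Fin (p - d) :=
    (finCongr (Nat.add_sub_cancel' hdp.le).symm).trans finSumFinEquiv.symm
  have hcompl := mul_transpose_add_mul_transpose_eq_one_s2 e hα hα0 horth
  have hA := (hΔ.transpose_mul_mul_same hα).isUnit
  have hZ := (hΔ.inv.transpose_mul_mul_same hα0).isUnit
  rw [isUnit_iff_isUnit_det] at hA hZ
  exact inv_mul_eq_neg_mul_inv_of_mul_add_mul_eq_zero hA hZ <|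
    transpose_mul_mul_add_transpose_mul_mul_eq_zero
      ((isUnit_iff_isUnit_det Δ).mp hΔ.isUnit) hcompl horth

theorem delta_cross_block_identity
    (p d : ℕ) (hd : 0 < d) (hdp : d < p)
    (Δ : Matrix (Fin p) (Fin p) ℝ) (hΔ : Δ.PosDef)
    (α : Matrix (Fin p) (Fin d) ℝ) (hα : αᵀ * α = 1)
    (α0 : Matrix (Fin p) (Fin (p - d)) ℝ) (hα0 : α0ᵀ * α0 = 1)
    (horth : αᵀ * α0 = 0) :
    (αᵀ * Δ * α)⁻¹ * (αᵀ * Δ * α0)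
      = -(αᵀ * Δ⁻¹ * α0 * (α0ᵀ * Δ⁻¹ * α0)⁻¹) :=
  delta_cross_block_identity_general p d hdp Δ hΔ α hα α0 hα0 horth
end

section
/- Let Δ be a symmetric positive definite real p×p matrix, let α be a real p×d matrix of rank d, let F be a real n×r matrix such that FᵀF is invertible, and let M be a real n×p matrix. Define g(ξ) = tr(α ξ Fᵀ M) − (1/2) tr(α ξ FᵀF ξᵀ αᵀ Δ) and ξ̂ = (αᵀΔα)⁻¹ αᵀ Mᵀ F (FᵀF)⁻¹. Then g(ξ̂) = (1/2) tr[(αᵀΔα)⁻¹ αᵀ Mᵀ F (FᵀF)⁻¹ Fᵀ M α]. -/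
/-! With `A = αᵀΔα`, `B = FᵀF` and `C = αᵀMᵀF`, the point `ξ̂ = A⁻¹CB⁻¹` is the stationary point
of `g`, and stationarity makes the quadratic term equal the linear one: `ξ̂Bξ̂ᵀA = ξ̂Cᵀ`. After
cycling traces both terms of `g(ξ̂)` become `tr(ξ̂Cᵀ)`, so `g(ξ̂) = tr(ξ̂Cᵀ) - ½ tr(ξ̂Cᵀ)`. -/

open Matrix

namespace Matrix

variable {K : Type*} [Field K] {m n : Type*} [Fintype n]

theorem mulVec_injective_of_rank_eq_card {A : Matrix m n K} (h : A.rank = Fintype.card n) :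
    Function.Injective A.mulVec := by
  rw [mulVec_injective_iff, linearIndependent_iff_card_eq_finrank_span, Set.finrank,
    ← rank_eq_finrank_span_cols, h]

variable [Fintype m] [DecidableEq m] [DecidableEq n]

theorem inv_mul_mul_inv_mul_mul_transpose_mul {A : Matrix m m K} {B : Matrix n n K}
    (hA : IsUnit A) (hAT : Aᵀ = A) (hB : IsUnit B) (hBT : Bᵀ = B) (C : Matrix m n K) :
    A⁻¹ * C * B⁻¹ * B * (A⁻¹ * C * B⁻¹)ᵀ * A = A⁻¹ * C * B⁻¹ * Cᵀ := by
  rw [nonsing_inv_mul_cancel_right _ _ ((isUnit_iff_isUnit_det B).mp hB), transpose_mul,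
    transpose_mul, transpose_nonsing_inv, transpose_nonsing_inv, hAT, hBT]
  simp only [Matrix.mul_assoc, nonsing_inv_mul _ ((isUnit_iff_isUnit_det A).mp hA), Matrix.mul_one]

end Matrix

theorem xi_maximizer_value_general
    (p d n r : ℕ)
    (Δ : Matrix (Fin p) (Fin p) ℝ) (hΔ : Δ.PosDef)
    (α : Matrix (Fin p) (Fin d) ℝ) (hα : α.rank = d)
    (F : Matrix (Fin n) (Fin r) ℝ) (hF : IsUnit (Fᵀ * F))
    (M : Matrix (Fin n) (Fin p) ℝ) :
    (α * ((αᵀ * Δ * α)⁻¹ * αᵀ * Mᵀ * F * (Fᵀ * F)⁻¹) * Fᵀ * M).trace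
      - (1 / 2) * (α * ((αᵀ * Δ * α)⁻¹ * αᵀ * Mᵀ * F * (Fᵀ * F)⁻¹) * (Fᵀ * F)
          * ((αᵀ * Δ * α)⁻¹ * αᵀ * Mᵀ * F * (Fᵀ * F)⁻¹)ᵀ * αᵀ * Δ).trace
      = (1 / 2) * ((αᵀ * Δ * α)⁻¹ * αᵀ * Mᵀ * F * (Fᵀ * F)⁻¹ * Fᵀ * M * α).trace := by
  have hA : (αᵀ * Δ * α).PosDef :=
    hΔ.conjTranspose_mul_mul_same (mulVec_injective_of_rank_eq_card (by simpa using hα))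
  have hBT : (Fᵀ * F)ᵀ = Fᵀ * F := by rw [transpose_mul, transpose_transpose]
  set A := αᵀ * Δ * α
  set B := Fᵀ * F
  set C := αᵀ * Mᵀ * F
  set ξ := A⁻¹ * C * B⁻¹
  have hξ : A⁻¹ * αᵀ * Mᵀ * F * B⁻¹ = ξ := by simp only [ξ, C, Matrix.mul_assoc]
  have hCT : Cᵀ = Fᵀ * M * α := by
    simp only [C, transpose_mul, transpose_transpose, Matrix.mul_assoc]
  have hlin : (α * ξ * Fᵀ * M).trace = (ξ * Cᵀ).trace := by
    rw [hCT, Matrix.mul_assoc, Matrix.mul_assoc, trace_mul_comm]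
    simp only [Matrix.mul_assoc]
  have hquad : (α * ξ * B * ξᵀ * αᵀ * Δ).trace = (ξ * Cᵀ).trace := calc
    _ = (ξ * B * ξᵀ * A).trace := by
      simp only [A, Matrix.mul_assoc]
      rw [trace_mul_comm]
      simp only [Matrix.mul_assoc]
    _ = (ξ * Cᵀ).trace := by
      rw [inv_mul_mul_inv_mul_mul_transpose_mul hA.isUnit hA.isHermitian hF hBT C]
  have hrhs : (ξ * Fᵀ * M * α).trace = (ξ * Cᵀ).trace := by
    rw [hCT]; simp only [Matrix.mul_assoc]
  rw [hξ, hlin, hquad, hrhs]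
  ring

theorem xi_maximizer_value
    (p d n r : ℕ) (hdp : d ≤ p)
    (Δ : Matrix (Fin p) (Fin p) ℝ) (hΔ : Δ.PosDef)
    (α : Matrix (Fin p) (Fin d) ℝ) (hα : α.rank = d)
    (F : Matrix (Fin n) (Fin r) ℝ) (hF : IsUnit (Fᵀ * F))
    (M : Matrix (Fin n) (Fin p) ℝ) :
    (α * ((αᵀ * Δ * α)⁻¹ * αᵀ * Mᵀ * F * (Fᵀ * F)⁻¹) * Fᵀ * M).trace
      - (1 / 2) * (α * ((αᵀ * Δ * α)⁻¹ * αᵀ * Mᵀ * F * (Fᵀ * F)⁻¹) * (Fᵀ * F)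
          * ((αᵀ * Δ * α)⁻¹ * αᵀ * Mᵀ * F * (Fᵀ * F)⁻¹)ᵀ * αᵀ * Δ).trace
      = (1 / 2) * ((αᵀ * Δ * α)⁻¹ * αᵀ * Mᵀ * F * (Fᵀ * F)⁻¹ * Fᵀ * M * α).trace :=
  xi_maximizer_value_general p d n r Δ hΔ α hα F hF M
end

section
/- Let S be a symmetric positive definite real p×p matrix and let S_fit be a symmetric positive semidefinite real p×p matrix such that S_res = S − S_fit is positive definite. Let λ₁ ≥ λ₂ ≥ … ≥ λ_p be the eigenvalues of the symmetric matrix S^{-1/2} S_fit S^{-1/2} (so 0 ≤ λᵢ < 1 for all i). Then for every real p×d matrix α of rank d, det(αᵀ S α) / det(αᵀ S_res α) ≤ ∏_{i=1}^{d} (1 − λᵢ)⁻¹, and equality holds when the columns of α are S^{-1/2} v₁, …, S^{-1/2} v_d, where v₁, …, v_d are orthonormal eigenvectors of S^{-1/2} S_fit S^{-1/2} corresponding to λ₁, …, λ_d. -/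
open Matrix

section

open scoped ComplexOrder

/-- The positive semidefinite square root of a positive semidefinite matrix
(the Mathlib definition of December 2024, removed from Mathlib since). -/
noncomputable def Matrix.PosSemidef.sqrt {n : Type*} [Fintype n] [DecidableEq n] {𝕜 : Type*}
    [RCLike 𝕜] {A : Matrix n n 𝕜} (hA : A.PosSemidef) : Matrix n n 𝕜 :=
  hA.1.eigenvectorUnitary.1 * diagonal (((↑) : ℝ → 𝕜) ∘ (hA.1.eigenvalues · |>.sqrt))
  * (star hA.1.eigenvectorUnitary : Matrix n n 𝕜)

end

/-!
With `M = S^{-1/2} V`, congruence by `M` turns `S` into `1` and `S - S_fit` into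
`diagonal (1 - λ)`, so for `α = M β` the ratio becomes `det (βᵀ β) / det (βᵀ (diagonal (1 - λ)) β)`.
By Cauchy–Binet both determinants are sums of the squared `d × d` minors `det (β_f)²`, weighted by
`1` and by `∏ i, (1 - λ (f i))` respectively, and each of these weights is at least the product of
the `d` smallest entries of `1 - λ`. The first `d` columns of `M` diagonalize both forms and attain
the bound.
-/

namespace Matrix

section Sqrt

open scoped ComplexOrder

variable {n 𝕜 : Type*} [Fintype n] [DecidableEq n] [RCLike 𝕜] {A : Matrix n n 𝕜}

theorem PosSemidef.sqrt_mul_self (hA : A.PosSemidef) : hA.sqrt * hA.sqrt = A := by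
  set U : Matrix n n 𝕜 := (hA.1.eigenvectorUnitary : Matrix n n 𝕜)
  have hU : star U * U = 1 := Unitary.coe_star_mul_self hA.1.eigenvectorUnitary
  have hD : diagonal ((RCLike.ofReal : ℝ → 𝕜) ∘ (hA.1.eigenvalues · |>.sqrt)) *
      diagonal ((RCLike.ofReal : ℝ → 𝕜) ∘ (hA.1.eigenvalues · |>.sqrt))
      = diagonal (RCLike.ofReal ∘ hA.1.eigenvalues) := by
    rw [diagonal_mul_diagonal]
    congr 1
    funext i
    simp [← RCLike.ofReal_mul, Real.mul_self_sqrt (hA.eigenvalues_nonneg i)]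
  conv_rhs => rw [hA.1.spectral_theorem, Unitary.conjStarAlgAut_apply]
  simp only [PosSemidef.sqrt, Matrix.mul_assoc]
  rw [← Matrix.mul_assoc (star U) U, hU, Matrix.one_mul, ← Matrix.mul_assoc _ _ (star U), hD]

theorem PosSemidef.conjTranspose_sqrt (hA : A.PosSemidef) : hA.sqrtᴴ = hA.sqrt := by
  simp [PosSemidef.sqrt, Matrix.mul_assoc, Matrix.star_eq_conjTranspose, diagonal_conjTranspose,
    Function.comp_def, Pi.star_def]

end Sqrt

section CauchyBinet

variable {R : Type*} [CommRing R] {m ι : Type*} [Fintype m] [DecidableEq m] [Fintype ι]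

theorem det_mul_eq_sum_prod_mul_det_submatrix (A : Matrix m ι R) (B : Matrix ι m R) :
    (A * B).det = ∑ f : m → ι, (∏ i, A i (f i)) * (B.submatrix f id).det := by
  have hrows : A * B = of fun i => ∑ k, A i k • B k := by
    ext i j
    simp [mul_apply, Finset.sum_apply]
  rw [hrows]
  change detRowAlternating.toMultilinearMap (fun i => ∑ k, A i k • B k) = _
  rw [MultilinearMap.map_sum]
  refine Finset.sum_congr rfl fun f _ => ?_
  rw [MultilinearMap.map_smul_univ, smul_eq_mul]
  rfl

/-- Cauchy–Binet, summed over all maps `m → ι`: a map that is not injective contributes `0`, and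
each injective one contributes the same term as its `(card m)!` reorderings. -/
theorem factorial_mul_det_mul_eq_sum (A : Matrix m ι R) (B : Matrix ι m R) :
    ((Fintype.card m).factorial : R) * (A * B).det
      = ∑ f : m → ι, (A.submatrix id f).det * (B.submatrix f id).det := by
  have hperm : ∀ σ : Equiv.Perm m, (A * B).det
      = ∑ f : m → ι, ((σ.sign : ℤ) : R) * (∏ i, A i (f (σ i))) * (B.submatrix f id).det := by
    intro σ
    rw [det_mul_eq_sum_prod_mul_det_submatrix, ← (σ.symm.arrowCongr (Equiv.refl ι)).sum_comp]
    refine Finset.sum_congr rfl fun f _ => ?_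
    have : B.submatrix (σ.symm.arrowCongr (Equiv.refl ι) f) id
        = (B.submatrix f id).submatrix σ id := by
      ext i j; simp [Equiv.arrowCongr_apply]
    rw [this, det_permute]
    simp [Equiv.arrowCongr_apply]
    ring
  calc ((Fintype.card m).factorial : R) * (A * B).det
      = ∑ σ : Equiv.Perm m, (A * B).det := by
        simp [Fintype.card_perm]
    _ = ∑ f : m → ι, (∑ σ : Equiv.Perm m, ((σ.sign : ℤ) : R) * ∏ i, A i (f (σ i)))
          * (B.submatrix f id).det := by
        rw [Finset.sum_congr rfl fun σ _ => hperm σ, Finset.sum_comm]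
        simp only [Finset.sum_mul]
    _ = _ := by
        refine Finset.sum_congr rfl fun f _ => ?_
        congr 1
        rw [← det_transpose, det_apply']
        rfl

end CauchyBinet

section Ordered

variable {R : Type*} [CommRing R] [LinearOrder R] [IsStrictOrderedRing R]
  {m ι : Type*} [Fintype m] [DecidableEq m] [Fintype ι] [DecidableEq ι]

theorem mul_det_transpose_mul_le_det_transpose_mul_diagonal_mul (B : Matrix ι m R)
    {μ : ι → R} {c : R} (hc : ∀ f : m → ι, Function.Injective f → c ≤ ∏ i, μ (f i)) :
    c * (Bᵀ * B).det ≤ (Bᵀ * diagonal μ * B).det := by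
  have hminor : ∀ f : m → ι,
      ((Bᵀ * diagonal μ).submatrix id f).det = (∏ i, μ (f i)) * (B.submatrix f id).det := by
    intro f
    have : (Bᵀ * diagonal μ).submatrix id f = (B.submatrix f id)ᵀ * diagonal (μ ∘ f) := by
      ext i j; simp [mul_diagonal]
    rw [this, det_mul, det_transpose, det_diagonal, mul_comm]
    rfl
  have hterm : ∀ f : m → ι, c * ((Bᵀ.submatrix id f).det * (B.submatrix f id).det)
      ≤ ((Bᵀ * diagonal μ).submatrix id f).det * (B.submatrix f id).det := by
    intro f
    rw [hminor, show Bᵀ.submatrix id f = (B.submatrix f id)ᵀ from rfl, det_transpose]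
    by_cases hf : Function.Injective f
    · nlinarith [hc f hf, mul_self_nonneg (B.submatrix f id).det]
    · obtain ⟨i, j, hij, hne⟩ := Function.not_injective_iff.mp hf
      have : (B.submatrix f id).det = 0 :=
        det_zero_of_row_eq hne (by ext k; simp [hij])
      simp [this]
  have hfact : (0 : R) < (Fintype.card m).factorial := by exact_mod_cast Nat.factorial_pos _
  refine le_of_mul_le_mul_left ?_ hfact
  rw [mul_left_comm, factorial_mul_det_mul_eq_sum, factorial_mul_det_mul_eq_sum, Finset.mul_sum]
  exact Finset.sum_le_sum fun f _ => hterm f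

end Ordered

end Matrix

theorem Fin.val_le_val_of_strictMono {d p : ℕ} {e : Fin d → Fin p} (he : StrictMono e)
    (i : Fin d) : (i : ℕ) ≤ e i := by
  classical
  calc (i : ℕ) = ((Finset.Iio i).image e).card := by
        rw [Finset.card_image_of_injective _ he.injective, Fin.card_Iio]
    _ ≤ (Finset.Iio (e i)).card := by
        refine Finset.card_le_card fun k hk => ?_
        obtain ⟨j, hj, rfl⟩ := Finset.mem_image.mp hk
        exact Finset.mem_Iio.mpr (he (Finset.mem_Iio.mp hj))
    _ = e i := Fin.card_Iio _

theorem Fin.prod_castLE_le_prod_of_injective {R : Type*} [CommMonoidWithZero R] [PartialOrder R]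
    [ZeroLEOneClass R] [PosMulMono R] {d p : ℕ} (hdp : d ≤ p) {μ : Fin p → R}
    (hμ : Monotone μ) (hμ0 : ∀ i, 0 ≤ μ i) {f : Fin d → Fin p} (hf : Function.Injective f) :
    ∏ i, μ (Fin.castLE hdp i) ≤ ∏ i, μ (f i) := by
  classical
  set s := Finset.univ.image f
  have hs : s.card = d := by simp [s, Finset.card_image_of_injective _ hf]
  have hsorted : ∏ i, μ (f i) = ∏ i, μ (s.orderEmbOfFin hs i) := by
    rw [← Finset.prod_image (f := μ) hf.injOn,
      ← Finset.prod_image (f := μ) (s.orderEmbOfFin hs).injective.injOn,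
      Finset.image_orderEmbOfFin_univ]
  rw [hsorted]
  exact Finset.prod_le_prod (fun i _ => hμ0 _) fun i _ =>
    hμ (Fin.le_def.mpr (Fin.val_le_val_of_strictMono (s.orderEmbOfFin hs).strictMono i))

namespace Matrix

theorem transpose_submatrix_mul_mul_submatrix {R n κ : Type*} [CommRing R] [Fintype n]
    (M X : Matrix n n R) (f : κ → n) :
    (M.submatrix id f)ᵀ * X * M.submatrix id f = (Mᵀ * X * M).submatrix f f :=
  rfl

section Congruence

variable {R n : Type*} [CommRing R] [Fintype n] [DecidableEq n]

theorem transpose_mul_mul_eq_one_of_mul_self_eq {S N V : Matrix n n R} (hN : IsUnit N.det)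
    (hNt : Nᵀ = N) (hNN : N * N = S) (hV : Vᵀ * V = 1) :
    (N⁻¹ * V)ᵀ * S * (N⁻¹ * V) = 1 := by
  rw [transpose_mul, transpose_nonsing_inv, hNt, ← hNN]
  simp only [Matrix.mul_assoc]
  rw [mul_nonsing_inv_cancel_left _ _ hN, nonsing_inv_mul_cancel_left _ _ hN, hV]

theorem transpose_mul_mul_eq_diagonal_of_mul_eq {T N V : Matrix n n R} {μ : n → R}
    (hNt : Nᵀ = N) (hV : Vᵀ * V = 1) (hEig : N⁻¹ * T * N⁻¹ * V = V * diagonal μ) :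
    (N⁻¹ * V)ᵀ * T * (N⁻¹ * V) = diagonal μ := by
  calc (N⁻¹ * V)ᵀ * T * (N⁻¹ * V) = Vᵀ * (N⁻¹ * T * N⁻¹ * V) := by
        rw [transpose_mul, transpose_nonsing_inv, hNt]
        simp only [Matrix.mul_assoc]
    _ = diagonal μ := by rw [hEig, ← Matrix.mul_assoc, hV, Matrix.one_mul]

end Congruence

section Real

variable {n : Type*} [Fintype n] [DecidableEq n] {A M : Matrix n n ℝ} {μ : n → ℝ}

theorem PosSemidef.nonneg_of_transpose_mul_mul_eq_diagonal (hA : A.PosSemidef)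
    (hAM : Mᵀ * A * M = diagonal μ) (i : n) : 0 ≤ μ i := by
  have h := hA.conjTranspose_mul_mul_same M
  rw [conjTranspose_eq_transpose_of_trivial, hAM] at h
  exact posSemidef_diagonal_iff.mp h i

theorem PosDef.pos_of_transpose_mul_mul_eq_diagonal (hA : A.PosDef) (hM : IsUnit M)
    (hAM : Mᵀ * A * M = diagonal μ) (i : n) : 0 < μ i := by
  have h := hA.conjTranspose_mul_mul_same (mulVec_injective_iff_isUnit.mpr hM)
  rw [conjTranspose_eq_transpose_of_trivial, hAM] at h
  exact posDef_diagonal_iff.mp h i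

theorem det_div_det_submatrix_eq_inv_prod {κ : Type*} [Fintype κ] [DecidableEq κ]
    {S R : Matrix n n ℝ} (hSM : Mᵀ * S * M = 1) (hRM : Mᵀ * R * M = diagonal μ) {f : κ → n}
    (hf : Function.Injective f) :
    ((M.submatrix id f)ᵀ * S * M.submatrix id f).det
        / ((M.submatrix id f)ᵀ * R * M.submatrix id f).det = (∏ i, μ (f i))⁻¹ := by
  rw [transpose_submatrix_mul_mul_submatrix, transpose_submatrix_mul_mul_submatrix, hSM, hRM,
    submatrix_one _ hf, submatrix_diagonal _ _ hf, det_one, det_diagonal, one_div]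
  rfl

end Real

theorem det_div_det_le_inv_prod_of_transpose_mul_mul_eq {p d : ℕ} (hdp : d ≤ p)
    {S R M : Matrix (Fin p) (Fin p) ℝ} (hM : IsUnit M) {μ : Fin p → ℝ} (hμ : Monotone μ)
    (hμ0 : ∀ i, 0 < μ i) (hSM : Mᵀ * S * M = 1) (hRM : Mᵀ * R * M = diagonal μ)
    (α : Matrix (Fin p) (Fin d) ℝ) :
    (αᵀ * S * α).det / (αᵀ * R * α).det ≤ (∏ i, μ (Fin.castLE hdp i))⁻¹ := by
  set β := M⁻¹ * α
  have hα : α = M * β := (mul_nonsing_inv_cancel_left M α ((isUnit_iff_isUnit_det M).mp hM)).symm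
  have hcongr : ∀ X, αᵀ * X * α = βᵀ * (Mᵀ * X * M) * β := by
    intro X
    rw [hα, transpose_mul]
    simp only [Matrix.mul_assoc]
  rw [hcongr, hcongr, hSM, hRM, Matrix.mul_one]
  have hc : 0 < ∏ i, μ (Fin.castLE hdp i) := Finset.prod_pos fun i _ => hμ0 _
  -- a singular denominator is covered too, through the junk value `x / 0 = 0`
  refine div_le_of_le_mul₀ ?_ (inv_nonneg.mpr hc.le) ?_
  · have := (posSemidef_diagonal_iff.mpr fun i => (hμ0 i).le).conjTranspose_mul_mul_same β
    rw [conjTranspose_eq_transpose_of_trivial] at this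
    exact this.det_nonneg
  · rw [le_inv_mul_iff₀ hc]
    exact mul_det_transpose_mul_le_det_transpose_mul_diagonal_mul β fun f hf =>
      Fin.prod_castLE_le_prod_of_injective hdp hμ (fun i => (hμ0 i).le) hf

end Matrix

theorem det_ratio_maximization_general
    (p d : ℕ) (hdp : d ≤ p)
    (S Sfit : Matrix (Fin p) (Fin p) ℝ)
    (hS : S.PosDef) (hSfit : Sfit.PosSemidef) (hSres : (S - Sfit).PosDef)
    (lam : Fin p → ℝ) (hlam : Antitone lam)
    (V : Matrix (Fin p) (Fin p) ℝ) (hV : Vᵀ * V = 1)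
    (hEig : hS.posSemidef.sqrt⁻¹ * Sfit * hS.posSemidef.sqrt⁻¹ * V
        = V * Matrix.diagonal lam) :
    (∀ i, 0 ≤ lam i ∧ lam i < 1) ∧
    (∀ α : Matrix (Fin p) (Fin d) ℝ, α.rank = d →
      (αᵀ * S * α).det / (αᵀ * (S - Sfit) * α).det
        ≤ ∏ i : Fin d, (1 - lam (Fin.castLE hdp i))⁻¹) ∧
    ((hS.posSemidef.sqrt⁻¹ * V.submatrix id (Fin.castLE hdp))ᵀ * S
          * (hS.posSemidef.sqrt⁻¹ * V.submatrix id (Fin.castLE hdp))).det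
        / ((hS.posSemidef.sqrt⁻¹ * V.submatrix id (Fin.castLE hdp))ᵀ * (S - Sfit)
          * (hS.posSemidef.sqrt⁻¹ * V.submatrix id (Fin.castLE hdp))).det
      = ∏ i : Fin d, (1 - lam (Fin.castLE hdp i))⁻¹ := by
  set N := hS.posSemidef.sqrt
  have hNN : N * N = S := hS.posSemidef.sqrt_mul_self
  have hNt : Nᵀ = N := by
    rw [← conjTranspose_eq_transpose_of_trivial]
    exact hS.posSemidef.conjTranspose_sqrt
  have hN : IsUnit N.det :=
    isUnit_iff_ne_zero.mpr fun h => hS.det_pos.ne' (by rw [← hNN, det_mul, h, zero_mul])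
  have hM : IsUnit (N⁻¹ * V) :=
    ((isUnit_iff_isUnit_det _).mpr (isUnit_nonsing_inv_det N hN)).mul
      (IsUnit.of_mul_eq_one_right Vᵀ hV)
  have hMS := transpose_mul_mul_eq_one_of_mul_self_eq hN hNt hNN hV
  have hMSfit := transpose_mul_mul_eq_diagonal_of_mul_eq hNt hV hEig
  have hMSres : (N⁻¹ * V)ᵀ * (S - Sfit) * (N⁻¹ * V) = diagonal (fun i => 1 - lam i) := by
    rw [Matrix.mul_sub, Matrix.sub_mul, hMS, hMSfit, ← diagonal_one, diagonal_sub]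
  have hlam01 : ∀ i, 0 ≤ lam i ∧ lam i < 1 := fun i =>
    ⟨hSfit.nonneg_of_transpose_mul_mul_eq_diagonal hMSfit i,
      sub_pos.mp (hSres.pos_of_transpose_mul_mul_eq_diagonal hM hMSres i)⟩
  refine ⟨hlam01, fun α _ => ?_, ?_⟩ <;> rw [Finset.prod_inv_distrib]
  · exact det_div_det_le_inv_prod_of_transpose_mul_mul_eq hdp hM
      (fun i j hij => sub_le_sub_left (hlam hij) 1) (fun i => sub_pos.mpr (hlam01 i).2) hMS hMSres α
  · exact det_div_det_submatrix_eq_inv_prod hMS hMSres (Fin.castLE_injective hdp)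

/-- Maximization of det(αᵀSα)/det(αᵀS_res α) over full-rank p×d matrices α, where
S_res = S − S_fit.  The maximum is ∏_{i<d} (1 − λᵢ)⁻¹, with λ₁ ≥ … ≥ λ_p the eigenvalues of
S^{-1/2} S_fit S^{-1/2}, and it is attained at the matrix whose columns are S^{-1/2}v₁, …,
S^{-1/2}v_d with v₁, …, v_d corresponding orthonormal eigenvectors. -/
theorem det_ratio_maximization
    (p d : ℕ) (hd : 0 < d) (hdp : d ≤ p)
    (S Sfit : Matrix (Fin p) (Fin p) ℝ)
    (hS : S.PosDef) (hSfit : Sfit.PosSemidef) (hSres : (S - Sfit).PosDef)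
    (lam : Fin p → ℝ) (hlam : Antitone lam)
    (V : Matrix (Fin p) (Fin p) ℝ) (hV : Vᵀ * V = 1)
    (hEig : hS.posSemidef.sqrt⁻¹ * Sfit * hS.posSemidef.sqrt⁻¹ * V
        = V * Matrix.diagonal lam) :
    (∀ i, 0 ≤ lam i ∧ lam i < 1) ∧
    (∀ α : Matrix (Fin p) (Fin d) ℝ, α.rank = d →
      (αᵀ * S * α).det / (αᵀ * (S - Sfit) * α).det
        ≤ ∏ i : Fin d, (1 - lam (Fin.castLE hdp i))⁻¹) ∧
    ((hS.posSemidef.sqrt⁻¹ * V.submatrix id (Fin.castLE hdp))ᵀ * S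
          * (hS.posSemidef.sqrt⁻¹ * V.submatrix id (Fin.castLE hdp))).det
        / ((hS.posSemidef.sqrt⁻¹ * V.submatrix id (Fin.castLE hdp))ᵀ * (S - Sfit)
          * (hS.posSemidef.sqrt⁻¹ * V.submatrix id (Fin.castLE hdp))).det
      = ∏ i : Fin d, (1 - lam (Fin.castLE hdp i))⁻¹ :=
  det_ratio_maximization_general p d hdp S Sfit hS hSfit hSres lam hlam V hV hEig
end
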